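/- Let p and q be probability mass functions on a finite type α and let m = (p+q)/2 be their midpoint mixture. Then for every subset E ⊆ α, |p(E) − q(E)| ≤ √(KL(p‖m) + KL(q‖m)); equivalently, |p(E) − q(E)| ≤ √(2 · JS(p,q)). -/

import Mathlib

open Finset

open Classical in
/-- Kullback–Leibler divergence of finitely supported pmfs (natural logarithm),
restricted to the support of `p`. -/
noncomputable def KL {α : Type*} [Fintype α] (p q : α → ℝ) : ℝ :=
  ∑ x, if 0 < p x then p x * Real.log (p x / q x) else 0

/-- Jensen–Shannon divergence of finitely supported pmfs. -/
noncomputable def JS {α : Type*} [Fintype α] (p q : α → ℝ) : ℝ :=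
  KL p (fun x => (p x + q x) / 2) / 2 + KL q (fun x => (p x + q x) / 2) / 2

/-!
Pointwise, with `m = (a + b) / 2` and `u = (a - b) / (a + b)`, the two KL summands add up to
`m ((1 + u) log (1 + u) + (1 - u) log (1 - u)) ≥ m u² = (a - b)² / (2 (a + b))`. The scalar
inequality is even in `u`, and for `u ≥ 0` the derivative of the difference,
`log (1 + u) - log (1 - u) - 2 u = 2 Σ_{k ≥ 1} u^(2k+1) / (2k+1)`, is nonnegative. Summing,
`KL(p‖m) + KL(q‖m)` dominates half the triangular discrimination `Σ (p - q)² / (p + q)`, which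
by Cauchy–Schwarz dominates `(Σ |p - q|)² / 4`, and `Σ |p - q| ≥ 2 |p(E) - q(E)|` because
`p - q` has total mass zero.
-/

open Real

noncomputable def triangularDiscrimination {α : Type*} [Fintype α] (p q : α → ℝ) : ℝ :=
  ∑ x, (p x - q x) ^ 2 / (p x + q x)

lemma two_mul_le_log_one_add_sub_log_one_sub {u : ℝ} (hu0 : 0 ≤ u) (hu1 : u < 1) :
    2 * u ≤ log (1 + u) - log (1 - u) := by
  simpa using le_hasSum (hasSum_log_sub_log_of_abs_lt_one (abs_lt.2 ⟨by linarith, hu1⟩)) 0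
    fun k _ ↦ by positivity

lemma hasDerivAt_one_add_mul_log_add_one_sub_mul_log {t : ℝ} (ht : |t| < 1) :
    HasDerivAt (fun s ↦ (1 + s) * log (1 + s) + (1 - s) * log (1 - s))
      (log (1 + t) - log (1 - t)) t := by
  obtain ⟨h1, h2⟩ := abs_lt.1 ht
  have d1 := (hasDerivAt_mul_log (x := 1 + t) (by linarith)).comp t ((hasDerivAt_id t).const_add 1)
  have d2 := (hasDerivAt_mul_log (x := 1 - t) (by linarith)).comp t ((hasDerivAt_id t).const_sub 1)
  exact (d1.add d2).congr_deriv (by ring)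

lemma sq_le_one_add_mul_log_add_one_sub_mul_log {u : ℝ} (hu : |u| ≤ 1) :
    u ^ 2 ≤ (1 + u) * log (1 + u) + (1 - u) * log (1 - u) := by
  wlog hu0 : 0 ≤ u generalizing u
  · have := this (u := -u) (by rwa [abs_neg]) (by linarith)
    rw [neg_sq, sub_neg_eq_add, ← sub_eq_add_neg] at this
    linarith
  have hu1 : u ≤ 1 := (abs_le.1 hu).2
  set g : ℝ → ℝ := fun s ↦ (1 + s) * log (1 + s) + (1 - s) * log (1 - s) - s ^ 2
  have hg' : ∀ t ∈ Set.Ioo 0 u, HasDerivAt g (log (1 + t) - log (1 - t) - 2 * t) t :=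
    fun t ht ↦ ((hasDerivAt_one_add_mul_log_add_one_sub_mul_log
      (abs_lt.2 ⟨by linarith [ht.1], by linarith [ht.2]⟩)).sub
        (hasDerivAt_pow 2 t)).congr_deriv (by ring)
  have hg : MonotoneOn g (Set.Icc 0 u) := by
    refine monotoneOn_of_hasDerivWithinAt_nonneg (convex_Icc 0 u)
      (f' := fun t ↦ log (1 + t) - log (1 - t) - 2 * t) ?_ ?_ ?_
    · have := continuous_mul_log
      fun_prop
    · rw [interior_Icc]
      exact fun t ht ↦ (hg' t ht).hasDerivWithinAt
    · rw [interior_Icc]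
      intro t ht
      linarith [two_mul_le_log_one_add_sub_log_one_sub ht.1.le (by linarith [ht.2])]
  simpa [g] using hg ⟨le_rfl, hu0⟩ ⟨hu0, le_rfl⟩ hu0

lemma sq_sub_div_add_le_two_mul_mul_log_add_mul_log {a b : ℝ} (ha : 0 ≤ a) (hb : 0 ≤ b) :
    (a - b) ^ 2 / (a + b) ≤
      2 * (a * log (a / ((a + b) / 2)) + b * log (b / ((a + b) / 2))) := by
  rcases (add_nonneg ha hb).eq_or_lt with hab | hab
  · obtain rfl : a = 0 := by linarith
    obtain rfl : b = 0 := by linarith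
    simp
  set m := (a + b) / 2 with hm_def
  set u := (a - b) / (a + b) with hu_def
  have hm : 0 < m := by positivity
  have hu : |u| ≤ 1 := abs_le.2
    ⟨by rw [le_div_iff₀ hab]; linarith, by rw [div_le_one hab]; linarith⟩
  have ha' : a / m = 1 + u := by rw [hm_def, hu_def]; field_simp; ring
  have hb' : b / m = 1 - u := by rw [hm_def, hu_def]; field_simp; ring
  calc (a - b) ^ 2 / (a + b) = 2 * (m * u ^ 2) := by rw [hm_def, hu_def]; field_simp
    _ ≤ 2 * (m * ((1 + u) * log (1 + u) + (1 - u) * log (1 - u))) := by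
      gcongr; exact sq_le_one_add_mul_log_add_one_sub_mul_log hu
    _ = _ := by rw [← ha', ← hb']; field_simp

section Divergences

variable {α : Type*} [Fintype α] {p q : α → ℝ}

lemma KL_eq_sum_mul_log (hp : ∀ x, 0 ≤ p x) (q : α → ℝ) :
    KL p q = ∑ x, p x * log (p x / q x) := by
  refine sum_congr rfl fun x _ ↦ ?_
  rcases (hp x).lt_or_eq with h | h
  · rw [if_pos h]
  · simp [← h]

lemma triangularDiscrimination_le_two_mul_KL_add_KL
    (hp : ∀ x, 0 ≤ p x) (hq : ∀ x, 0 ≤ q x) :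
    triangularDiscrimination p q ≤
      2 * (KL p (fun x => (p x + q x) / 2) + KL q (fun x => (p x + q x) / 2)) := by
  rw [KL_eq_sum_mul_log hp, KL_eq_sum_mul_log hq, ← sum_add_distrib, mul_sum]
  exact sum_le_sum fun x _ ↦ sq_sub_div_add_le_two_mul_mul_log_add_mul_log (hp x) (hq x)

lemma sq_sum_abs_sub_le_triangularDiscrimination_mul
    (hp : ∀ x, 0 ≤ p x) (hq : ∀ x, 0 ≤ q x) :
    (∑ x, |p x - q x|) ^ 2 ≤ triangularDiscrimination p q * ∑ x, (p x + q x) := by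
  refine sum_sq_le_sum_mul_sum_of_sq_le_mul _ (fun x _ ↦ div_nonneg (sq_nonneg _)
    (add_nonneg (hp x) (hq x))) (fun x _ ↦ add_nonneg (hp x) (hq x)) fun x _ ↦ ?_
  rcases eq_or_ne (p x + q x) 0 with h | h
  · have hpx : p x = 0 := by linarith [hp x, hq x]
    have hqx : q x = 0 := by linarith [hp x, hq x]
    simp [hpx, hqx]
  · rw [sq_abs, div_mul_cancel₀ _ h]

lemma two_mul_abs_sum_le_sum_abs [DecidableEq α] {f : α → ℝ} (hf : ∑ x, f x = 0)
    (E : Finset α) : 2 * |∑ x ∈ E, f x| ≤ ∑ x, |f x| := by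
  have hcompl : ∑ x ∈ Eᶜ, f x = -∑ x ∈ E, f x := by
    rw [eq_neg_iff_add_eq_zero, add_comm, sum_add_sum_compl, hf]
  calc 2 * |∑ x ∈ E, f x| = |∑ x ∈ E, f x| + |∑ x ∈ Eᶜ, f x| := by
        rw [hcompl, abs_neg]; ring
    _ ≤ ∑ x ∈ E, |f x| + ∑ x ∈ Eᶜ, |f x| :=
        add_le_add (abs_sum_le_sum_abs _ _) (abs_sum_le_sum_abs _ _)
    _ = ∑ x, |f x| := sum_add_sum_compl _ _

lemma sq_sum_sub_sum_le_KL_add_KL (hp0 : ∀ x, 0 ≤ p x) (hq0 : ∀ x, 0 ≤ q x)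
    (hp1 : ∑ x, p x = 1) (hq1 : ∑ x, q x = 1) (E : Finset α) :
    (∑ x ∈ E, p x - ∑ x ∈ E, q x) ^ 2 ≤
      KL p (fun x => (p x + q x) / 2) + KL q (fun x => (p x + q x) / 2) := by
  classical
  have hmass : ∑ x, (p x - q x) = 0 := by rw [sum_sub_distrib, hp1, hq1, sub_self]
  have hsum : ∑ x, (p x + q x) = 2 := by rw [sum_add_distrib, hp1, hq1]; norm_num
  have key : (2 * |∑ x ∈ E, (p x - q x)|) ^ 2 ≤
      2 * (2 * (KL p (fun x => (p x + q x) / 2) + KL q (fun x => (p x + q x) / 2))) :=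
    calc _ ≤ (∑ x, |p x - q x|) ^ 2 :=
          pow_le_pow_left₀ (by positivity) (two_mul_abs_sum_le_sum_abs hmass E) 2
      _ ≤ triangularDiscrimination p q * 2 :=
          hsum ▸ sq_sum_abs_sub_le_triangularDiscrimination_mul hp0 hq0
      _ ≤ _ := by linarith [triangularDiscrimination_le_two_mul_KL_add_KL hp0 hq0]
  rw [mul_pow, sq_abs, sum_sub_distrib] at key
  linarith

end Divergences

/-- Pinsker-type bound via the Jensen–Shannon divergence. -/
theorem stmt3 {α : Type*} [Fintype α] (p q : α → ℝ)
    (hp0 : ∀ x, 0 ≤ p x) (hq0 : ∀ x, 0 ≤ q x)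
    (hp1 : ∑ x, p x = 1) (hq1 : ∑ x, q x = 1) (E : Finset α) :
    |(∑ x ∈ E, p x) - ∑ x ∈ E, q x| ≤
        Real.sqrt (KL p (fun x => (p x + q x) / 2) + KL q (fun x => (p x + q x) / 2)) ∧
      |(∑ x ∈ E, p x) - ∑ x ∈ E, q x| ≤ Real.sqrt (2 * JS p q) := by
  have hJS : 2 * JS p q = KL p (fun x => (p x + q x) / 2) + KL q (fun x => (p x + q x) / 2) := by
    rw [JS]; ring
  have hbound := sq_sum_sub_sum_le_KL_add_KL hp0 hq0 hp1 hq1 E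
  exact ⟨abs_le_sqrt hbound, hJS ▸ abs_le_sqrt hbound⟩
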